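/- arXiv:1908.07071 — 3 statements merged into one kernel-verified Lean document; each statement's English description precedes it below -/
import Mathlib

section
/- (Lions' lemma, abstract version) Let V be a real inner product space with a symmetric positive definite bilinear form a(·,·), and let V₀, …, V_J be subspaces with V = V₀ + ⋯ + V_J. Let P_j : V → V_j denote the a-orthogonal projection onto V_j. Suppose c₀ > 0 is such that every u ∈ V admits a decomposition u = ∑ⱼ uⱼ with uⱼ ∈ Vⱼ and ∑ⱼ a(uⱼ, uⱼ) ≤ c₀⁻¹ a(u,u). Then c₀ a(u,u) ≤ ∑ⱼ a(Pⱼ u, u) for all u ∈ V. -/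
/-!
Writing `u = ∑ uⱼ` with `uⱼ ∈ Vⱼ` and pairing with `u` gives `a(u, u) = ∑ a(uⱼ, Pⱼ u)`, since
`u - Pⱼ u` is orthogonal to `Vⱼ`. Cauchy–Schwarz, together with `a(Pⱼ u, Pⱼ u) = a(Pⱼ u, u)`,
then yields `a(u, u)² ≤ (∑ a(uⱼ, uⱼ)) · ∑ a(Pⱼ u, u) ≤ c₀⁻¹ a(u, u) · ∑ a(Pⱼ u, u)`.
-/

open RealInnerProductSpace

namespace Submodule

variable {E : Type*} [NormedAddCommGroup E] [InnerProductSpace ℝ E]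

theorem real_inner_starProjection_self_eq_norm_sq (K : Submodule ℝ E) [K.HasOrthogonalProjection]
    (u : E) : ⟪K.starProjection u, u⟫ = ‖K.starProjection u‖ ^ 2 :=
  K.re_inner_starProjection_eq_normSq u

theorem real_inner_starProjection_right_of_mem {K : Submodule ℝ E} [K.HasOrthogonalProjection]
    {v : E} (hv : v ∈ K) (u : E) : ⟪v, K.starProjection u⟫ = ⟪v, u⟫ := by
  rw [← K.inner_starProjection_left_eq_right, starProjection_eq_self_iff.mpr hv]

theorem sq_real_inner_self_le_sum_inner_mul_sum_inner_starProjection {ι : Type*} [Fintype ι]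
    (V : ι → Submodule ℝ E) [∀ i, (V i).HasOrthogonalProjection] {f : ι → E} {u : E}
    (hf : ∀ i, f i ∈ V i) (hu : ∑ i, f i = u) :
    ⟪u, u⟫ ^ 2 ≤ (∑ i, ⟪f i, f i⟫) * ∑ i, ⟪(V i).starProjection u, u⟫ := by
  have hpair : ⟪u, u⟫ = ∑ i, ⟪f i, (V i).starProjection u⟫ :=
    calc ⟪u, u⟫ = ∑ i, ⟪f i, u⟫ := by rw [← sum_inner, hu]
      _ = _ := by simp only [real_inner_starProjection_right_of_mem (hf _)]
  have hle : ⟪u, u⟫ ≤ ∑ i, ‖f i‖ * ‖(V i).starProjection u‖ :=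
    hpair ▸ Finset.sum_le_sum fun i _ => real_inner_le_norm _ _
  calc ⟪u, u⟫ ^ 2 ≤ (∑ i, ‖f i‖ * ‖(V i).starProjection u‖) ^ 2 :=
        pow_le_pow_left₀ real_inner_self_nonneg hle 2
    _ ≤ (∑ i, ‖f i‖ ^ 2) * ∑ i, ‖(V i).starProjection u‖ ^ 2 :=
        Finset.sum_mul_sq_le_sq_mul_sq _ _ _
    _ = _ := by
        simp only [real_inner_self_eq_norm_sq, real_inner_starProjection_self_eq_norm_sq]

end Submodule

theorem stmt_3_general {E : Type*} [NormedAddCommGroup E] [InnerProductSpace ℝ E]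
    [FiniteDimensional ℝ E] {J : ℕ} (V : Fin (J + 1) → Submodule ℝ E)
    (c₀ : ℝ) (hc₀ : 0 < c₀)
    (hdecomp : ∀ u : E, ∃ f : Fin (J + 1) → E,
      (∀ j, f j ∈ V j) ∧ u = ∑ j, f j ∧
      ∑ j, ⟪f j, f j⟫ ≤ c₀⁻¹ * ⟪u, u⟫) :
    ∀ u : E, c₀ * ⟪u, u⟫ ≤ ∑ j, ⟪((V j).orthogonalProjection u : E), u⟫ := by
  intro u
  obtain ⟨f, hf, hu, hf_le⟩ := hdecomp u
  change c₀ * ⟪u, u⟫ ≤ ∑ j, ⟪(V j).starProjection u, u⟫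
  have hS : 0 ≤ ∑ j, ⟪(V j).starProjection u, u⟫ :=
    Finset.sum_nonneg fun j _ => (V j).re_inner_starProjection_nonneg u
  have hsq : ⟪u, u⟫ ^ 2 ≤ c₀⁻¹ * ⟪u, u⟫ * ∑ j, ⟪(V j).starProjection u, u⟫ :=
    (Submodule.sq_real_inner_self_le_sum_inner_mul_sum_inner_starProjection V hf hu.symm).trans
      (mul_le_mul_of_nonneg_right hf_le hS)
  rw [inv_mul_eq_div, div_mul_eq_mul_div, le_div_iff₀ hc₀] at hsq
  nlinarith [real_inner_self_nonneg (x := u)]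

theorem stmt_3 {E : Type*} [NormedAddCommGroup E] [InnerProductSpace ℝ E]
    [FiniteDimensional ℝ E] {J : ℕ} (V : Fin (J + 1) → Submodule ℝ E)
    (hsum : (⨆ j, V j) = ⊤) (c₀ : ℝ) (hc₀ : 0 < c₀)
    (hdecomp : ∀ u : E, ∃ f : Fin (J + 1) → E,
      (∀ j, f j ∈ V j) ∧ u = ∑ j, f j ∧
      ∑ j, ⟪f j, f j⟫ ≤ c₀⁻¹ * ⟪u, u⟫) :
    ∀ u : E, c₀ * ⟪u, u⟫ ≤ ∑ j, ⟪((V j).orthogonalProjection u : E), u⟫ :=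
  stmt_3_general V c₀ hc₀ hdecomp
end

section
/- (IP–BR2 penalty term equivalence, one direction) Let r_e be the lifting operator defined by ∫_Ω r_e(φ)·τ dx = −∫_e φ·{τ} ds for all τ in the discrete vector-valued space, and assume the inverse trace inequality ‖v_B‖²_{L²(K)} ≤ C (h/p²) ‖v_B‖²_{L²(∂K)} for functions v_B vanishing at interior Gauss-Lobatto nodes. Then the jump of any v in the DG space satisfies (p²/h) ‖[[v]]‖²_{L²(e)} ≤ C′ ‖r_e([[v]])‖²_{L²(Ω)} with C′ independent of h and p. -/
/-! Testing the lifting identity against the extension `τ` of the jump gives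
`‖φ‖² = -⟪r φ, τ⟫ ≤ ‖r φ‖ ‖τ‖` (Cauchy–Schwarz); squaring and inserting the inverse trace
inequality `‖τ‖² ≤ C (h / p²) ‖φ‖²` leaves `‖φ‖² ≤ C (h / p²) ‖r φ‖²` after cancelling `‖φ‖²`. -/

open RealInnerProductSpace

section Lifting

variable {W F : Type*} [NormedAddCommGroup W] [InnerProductSpace ℝ W]
  [NormedAddCommGroup F] [InnerProductSpace ℝ F]

theorem sq_norm_le_norm_lift_mul_norm {r : F → W} {avg : W → F}
    (hr : ∀ φ τ, ⟪r φ, τ⟫ = -⟪φ, avg τ⟫) {φ : F} {τ : W} (hτ : ⟪φ, avg τ⟫ = ‖φ‖ ^ 2) :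
    ‖φ‖ ^ 2 ≤ ‖r φ‖ * ‖τ‖ :=
  calc ‖φ‖ ^ 2 = ⟪r φ, -τ⟫ := by rw [inner_neg_right, hr, hτ, neg_neg]
    _ ≤ ‖r φ‖ * ‖-τ‖ := real_inner_le_norm _ _
    _ = ‖r φ‖ * ‖τ‖ := by rw [norm_neg]

theorem sq_norm_le_mul_sq_norm_lift (r : F →ₗ[ℝ] W) {avg : W → F}
    (hr : ∀ φ τ, ⟪r φ, τ⟫ = -⟪φ, avg τ⟫) {K : ℝ} {φ : F} {τ : W}
    (hτ : ⟪φ, avg τ⟫ = ‖φ‖ ^ 2) (htrace : ‖τ‖ ^ 2 ≤ K * ‖φ‖ ^ 2) :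
    ‖φ‖ ^ 2 ≤ K * ‖r φ‖ ^ 2 := by
  rcases eq_or_ne φ 0 with rfl | hφ
  · simp
  have hpos : 0 < ‖φ‖ ^ 2 := by positivity
  have hCS := sq_norm_le_norm_lift_mul_norm hr hτ
  refine le_of_mul_le_mul_right ?_ hpos
  calc ‖φ‖ ^ 2 * ‖φ‖ ^ 2 ≤ (‖r φ‖ * ‖τ‖) ^ 2 := by rw [← sq]; gcongr
    _ = ‖r φ‖ ^ 2 * ‖τ‖ ^ 2 := by ring
    _ ≤ ‖r φ‖ ^ 2 * (K * ‖φ‖ ^ 2) := by gcongr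
    _ = K * ‖r φ‖ ^ 2 * ‖φ‖ ^ 2 := by ring

end Lifting

theorem stmt_15_general {W F : Type*} [NormedAddCommGroup W] [InnerProductSpace ℝ W]
    [NormedAddCommGroup F] [InnerProductSpace ℝ F]
    (r : F →ₗ[ℝ] W) (avg : W →ₗ[ℝ] F)
    (hr : ∀ (φ : F) (τ : W), ⟪r φ, τ⟫ = -⟪φ, avg τ⟫)
    (C h p : ℝ) (hh : 0 < h) (hp : 0 < p)
    (jv : F) (ext : W)
    (hext : ⟪jv, avg ext⟫ = ‖jv‖ ^ 2)
    (htrace : ‖ext‖ ^ 2 ≤ C * (h / p ^ 2) * ‖jv‖ ^ 2) :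
    (p ^ 2 / h) * ‖jv‖ ^ 2 ≤ C * ‖r jv‖ ^ 2 := by
  have hlift := sq_norm_le_mul_sq_norm_lift r hr hext htrace
  calc p ^ 2 / h * ‖jv‖ ^ 2 ≤ p ^ 2 / h * (C * (h / p ^ 2) * ‖r jv‖ ^ 2) := by gcongr
    _ = C * ‖r jv‖ ^ 2 := by field_simp

theorem stmt_15 {W F : Type*} [NormedAddCommGroup W] [InnerProductSpace ℝ W]
    [NormedAddCommGroup F] [InnerProductSpace ℝ F]
    (r : F →ₗ[ℝ] W) (avg : W →ₗ[ℝ] F)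
    (hr : ∀ (φ : F) (τ : W), ⟪r φ, τ⟫ = -⟪φ, avg τ⟫)
    (C h p : ℝ) (hC : 0 < C) (hh : 0 < h) (hp : 0 < p)
    (jv : F) (ext : W)
    (hext : ⟪jv, avg ext⟫ = ‖jv‖ ^ 2)
    (htrace : ‖ext‖ ^ 2 ≤ C * (h / p ^ 2) * ‖jv‖ ^ 2) :
    (p ^ 2 / h) * ‖jv‖ ^ 2 ≤ C * ‖r jv‖ ^ 2 :=
  stmt_15_general r avg hr C h p hh hp jv ext hext htrace
end

section
/- (Two-subspace additive Schwarz stability) Let V = V₁ + V₂ be a finite-dimensional space with inner product a(·,·), and suppose there exists γ ≥ 1 such that every u ∈ V can be written u = u₁ + u₂ with uᵢ ∈ Vᵢ and a(u₁,u₁) + a(u₂,u₂) ≤ γ a(u,u). Then for the a-orthogonal projections P₁, P₂ onto V₁, V₂: γ⁻¹ a(u,u) ≤ a(P₁u,u) + a(P₂u,u) ≤ 2 a(u,u) for all u ∈ V. -/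
open RealInnerProductSpace

/-
Each `Pᵢ` is an orthogonal projection, so `⟪Pᵢ u, u⟫ = ‖Pᵢ u‖² ≤ ‖u‖²`, which gives the upper
bound. For the lower bound (Lions' lemma), split `u = ∑ uᵢ` stably; since `uᵢ ∈ Vᵢ`,
`‖u‖² = ∑ ⟪uᵢ, u⟫ = ∑ ⟪uᵢ, Pᵢ u⟫ ≤ (∑ ‖uᵢ‖²)^{1/2} (∑ ‖Pᵢ u‖²)^{1/2} ≤ (γ ‖u‖²)^{1/2} (∑ ⟪Pᵢ u, u⟫)^{1/2}`,
and squaring gives `‖u‖² ≤ γ ∑ ⟪Pᵢ u, u⟫`.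
-/

namespace Submodule

variable {E : Type*} [NormedAddCommGroup E] [InnerProductSpace ℝ E]

theorem inner_orthogonalProjectionOnto_self_eq_norm_sq (K : Submodule ℝ E)
    [K.HasOrthogonalProjection] (u : E) :
    ⟪(K.orthogonalProjectionOnto u : E), u⟫ = ‖K.orthogonalProjectionOnto u‖ ^ 2 := by
  rw [← inner_orthogonalProjectionOnto_eq_of_mem_left, real_inner_self_eq_norm_sq]

theorem inner_orthogonalProjectionOnto_self_le_norm_sq (K : Submodule ℝ E)
    [K.HasOrthogonalProjection] (u : E) :
    ⟪(K.orthogonalProjectionOnto u : E), u⟫ ≤ ‖u‖ ^ 2 := by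
  rw [inner_orthogonalProjectionOnto_self_eq_norm_sq]
  gcongr
  exact K.norm_orthogonalProjectionOnto_apply_le u

variable {ι : Type*} (s : Finset ι) (V : ι → Submodule ℝ E) [∀ i, (V i).HasOrthogonalProjection]

theorem sum_inner_orthogonalProjectionOnto_le_card_mul (u : E) :
    ∑ i ∈ s, ⟪((V i).orthogonalProjectionOnto u : E), u⟫ ≤ s.card * ‖u‖ ^ 2 := by
  simpa using Finset.sum_le_sum fun i _ ↦ (V i).inner_orthogonalProjectionOnto_self_le_norm_sq u

theorem norm_sq_le_mul_sum_inner_orthogonalProjectionOnto {u : E} {w : ι → E}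
    (hw : ∀ i ∈ s, w i ∈ V i) (hu : u = ∑ i ∈ s, w i) {γ : ℝ}
    (hstable : ∑ i ∈ s, ‖w i‖ ^ 2 ≤ γ * ‖u‖ ^ 2) :
    ‖u‖ ^ 2 ≤ γ * ∑ i ∈ s, ⟪((V i).orthogonalProjectionOnto u : E), u⟫ := by
  rcases eq_or_ne u 0 with rfl | hu0
  · simp
  set S := ∑ i ∈ s, ‖(V i).orthogonalProjectionOnto u‖ ^ 2
  have hlions : ‖u‖ ^ 2 ≤ ∑ i ∈ s, ‖w i‖ * ‖(V i).orthogonalProjectionOnto u‖ :=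
    calc ‖u‖ ^ 2 = ∑ i ∈ s, ⟪w i, u⟫ := by
          rw [← real_inner_self_eq_norm_sq, ← sum_inner, ← hu]
      _ = ∑ i ∈ s, ⟪w i, ((V i).orthogonalProjectionOnto u : E)⟫ :=
          Finset.sum_congr rfl fun i hi ↦
            (inner_orthogonalProjectionOnto_eq_of_mem_left ⟨w i, hw i hi⟩ u).symm
      _ ≤ _ := Finset.sum_le_sum fun i _ ↦ real_inner_le_norm _ _
  have hsq : ‖u‖ ^ 2 * ‖u‖ ^ 2 ≤ ‖u‖ ^ 2 * (γ * S) :=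
    calc ‖u‖ ^ 2 * ‖u‖ ^ 2
        ≤ (∑ i ∈ s, ‖w i‖ * ‖(V i).orthogonalProjectionOnto u‖) ^ 2 := by rw [← sq]; gcongr
      _ ≤ (∑ i ∈ s, ‖w i‖ ^ 2) * S := Finset.sum_mul_sq_le_sq_mul_sq _ _ _
      _ ≤ γ * ‖u‖ ^ 2 * S := by gcongr
      _ = ‖u‖ ^ 2 * (γ * S) := by ring
  simp_rw [inner_orthogonalProjectionOnto_self_eq_norm_sq]
  exact le_of_mul_le_mul_left hsq (by positivity)

end Submodule

theorem stmt_18_general {E : Type*} [NormedAddCommGroup E] [InnerProductSpace ℝ E]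
    [FiniteDimensional ℝ E]
    (V₁ V₂ : Submodule ℝ E)
    (γ : ℝ) (hγ : 1 ≤ γ)
    (hdecomp : ∀ u : E, ∃ u₁ u₂ : E, u₁ ∈ V₁ ∧ u₂ ∈ V₂ ∧ u = u₁ + u₂ ∧
      ⟪u₁, u₁⟫ + ⟪u₂, u₂⟫ ≤ γ * ⟪u, u⟫) :
    ∀ u : E,
      γ⁻¹ * ⟪u, u⟫ ≤ ⟪(Submodule.orthogonalProjectionOnto V₁ u : E), u⟫
          + ⟪(Submodule.orthogonalProjectionOnto V₂ u : E), u⟫ ∧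
      ⟪(Submodule.orthogonalProjectionOnto V₁ u : E), u⟫
          + ⟪(Submodule.orthogonalProjectionOnto V₂ u : E), u⟫ ≤ 2 * ⟪u, u⟫ := by
  intro u
  obtain ⟨u₁, u₂, hu₁, hu₂, hu, hstable⟩ := hdecomp u
  have lower := Submodule.norm_sq_le_mul_sum_inner_orthogonalProjectionOnto Finset.univ ![V₁, V₂]
    (u := u) (w := ![u₁, u₂]) (by simp [Fin.forall_fin_two, hu₁, hu₂]) (by simp [hu])
    (by simpa [real_inner_self_eq_norm_sq] using hstable)
  have upper := Submodule.sum_inner_orthogonalProjectionOnto_le_card_mul Finset.univ ![V₁, V₂] u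
  simp only [Fin.sum_univ_two, Matrix.cons_val_zero, Matrix.cons_val_one, Finset.card_univ,
    Fintype.card_fin] at lower upper
  rw [real_inner_self_eq_norm_sq]
  exact ⟨(inv_mul_le_iff₀ (by linarith)).2 lower, upper⟩

theorem stmt_18 {E : Type*} [NormedAddCommGroup E] [InnerProductSpace ℝ E]
    [FiniteDimensional ℝ E]
    (V₁ V₂ : Submodule ℝ E) (hsum : V₁ ⊔ V₂ = ⊤)
    (γ : ℝ) (hγ : 1 ≤ γ)
    (hdecomp : ∀ u : E, ∃ u₁ u₂ : E, u₁ ∈ V₁ ∧ u₂ ∈ V₂ ∧ u = u₁ + u₂ ∧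
      ⟪u₁, u₁⟫ + ⟪u₂, u₂⟫ ≤ γ * ⟪u, u⟫) :
    ∀ u : E,
      γ⁻¹ * ⟪u, u⟫ ≤ ⟪(Submodule.orthogonalProjectionOnto V₁ u : E), u⟫
          + ⟪(Submodule.orthogonalProjectionOnto V₂ u : E), u⟫ ∧
      ⟪(Submodule.orthogonalProjectionOnto V₁ u : E), u⟫
          + ⟪(Submodule.orthogonalProjectionOnto V₂ u : E), u⟫ ≤ 2 * ⟪u, u⟫ :=
  stmt_18_general V₁ V₂ γ hγ hdecomp
end
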